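/- For every n ≥ 1 and every positive integer r, p^{⟨r,0⟩}_{n,0}(x) − ∑_{k=0}^{n−1} p^{⟨r,0⟩}_{n−1,k}(x) = x·∑_{j=1}^{r−1} ∑_{k=0}^{n−1} p^{⟨r,j⟩}_{n−1,k}(x). -/

import Mathlib

/-!
Write `A = 1 + x + ⋯ + x^(r-1)`. Since `∑ₖ xᵏ(1+x)^(n-1-k) = (1+x)ⁿ - xⁿ`, the series
`(1-x)ⁿ ∑ₘ ((1+m)ⁿ - mⁿ) xᵐ = (1-x)^(n+1) ∑ₘ (1+m)ⁿ xᵐ` shows `∑ₖ p_{n-1,k} = p_{n,0}`; the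
coefficient of `xⁿ` that the truncation in `p_{n,0}` might add is an `(n+1)`-st finite
difference of `tⁿ`, hence zero. So with `B = A^(n-1) p_{n,0}` both sides are Veronese sections
of `B`, and the identity becomes `S^r_0(A B) = S^r_0 B + x ∑_{j=1}^{r-1} S^r_j B`: the
coefficient of `x^(rm)` in `A B` collects those of `x^(rm), x^(rm-1), …, x^(rm-r+1)` in `B`.
Truncating at degree `n` loses nothing because `deg B ≤ (n-1) r < r n`.
-/

open Polynomial PowerSeries Finset

noncomputable section

/-- A real polynomial is *real-rooted* if it is the zero polynomial or
all of its (complex) roots are real. -/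
def RealRooted (p : Polynomial ℝ) : Prop :=
  p = 0 ∨ ∀ z ∈ (p.map (algebraMap ℝ ℂ)).roots, z.im = 0

/-- The number of real roots of `p`, counted with multiplicity, that are `≥ t`. -/
def rootsGe (p : Polynomial ℝ) (t : ℝ) : ℕ :=
  (p.roots.filter fun x => t ≤ x).card

/-- `Interlaces p q`: both `p` and `q` are real-rooted and, writing the roots of `p`
as α₁ ≥ α₂ ≥ ⋯ and those of `q` as β₁ ≥ β₂ ≥ ⋯, one has ⋯ ≤ α₂ ≤ β₂ ≤ α₁ ≤ β₁;
equivalently (and this is the formulation used here), for every `t` the number of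
roots of `q` that are `≥ t` exceeds the corresponding number for `p` by `0` or `1`.
By convention the zero polynomial interlaces and is interlaced by every
real-rooted polynomial. -/
def Interlaces (p q : Polynomial ℝ) : Prop :=
  RealRooted p ∧ RealRooted q ∧
    (p = 0 ∨ q = 0 ∨ ∀ t : ℝ, rootsGe q t = rootsGe p t ∨ rootsGe q t = rootsGe p t + 1)

/-- `(a, b)` is the symmetric decomposition of `p` with respect to `n`:
`p = a + x·b`, `a` has degree at most `n` with `xⁿ·a(1/x) = a(x)`, and `b` has
degree at most `n − 1` with `x^(n−1)·b(1/x) = b(x)`. -/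
def IsSymmDecomp (n : ℕ) (p a b : Polynomial ℝ) : Prop :=
  p = a + Polynomial.X * b ∧ a.natDegree ≤ n ∧ b.natDegree ≤ n - 1 ∧
    (∀ i ≤ n, a.coeff (n - i) = a.coeff i) ∧
    (∀ i ≤ n - 1, b.coeff (n - 1 - i) = b.coeff i)

/-- `p` has a nonnegative, real-rooted symmetric decomposition with respect to `n`. -/
def HasNonnegRealRootedSymmDecomp (n : ℕ) (p : Polynomial ℝ) : Prop :=
  ∃ a b : Polynomial ℝ, IsSymmDecomp n p a b ∧
    (∀ i, 0 ≤ a.coeff i) ∧ (∀ i, 0 ≤ b.coeff i) ∧ RealRooted a ∧ RealRooted b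

/-- `p` has a nonnegative, real-rooted and interlacing symmetric decomposition
with respect to `n` (interlacing: `a` is interlaced by `b`). -/
def HasInterlacingSymmDecomp (n : ℕ) (p : Polynomial ℝ) : Prop :=
  ∃ a b : Polynomial ℝ, IsSymmDecomp n p a b ∧
    (∀ i, 0 ≤ a.coeff i) ∧ (∀ i, 0 ≤ b.coeff i) ∧ RealRooted a ∧ RealRooted b ∧
    Interlaces b a

/-- `pnk n k` is the polynomial `p_{n,k} = 𝒟ₙ(xᵏ)`, the polynomial of degree at most `n`
determined by `∑_{m ≥ 0} mᵏ (1+m)^(n−k) xᵐ = p_{n,k}(x)/(1−x)^(n+1)`. -/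
def pnk (n k : ℕ) : Polynomial ℝ :=
  PowerSeries.trunc (n + 1)
    ((1 - PowerSeries.X : PowerSeries ℝ) ^ (n + 1) *
      PowerSeries.mk fun m => (m : ℝ) ^ k * (1 + (m : ℝ)) ^ (n - k))

/-- `prjnk r j n k` is the polynomial `p^{⟨r,j⟩}_{n,k} = S^r_j((1+x+⋯+x^(r−1))ⁿ · p_{n,k}(x))`,
where `S^r_j` is the `j`-th Veronese `r`-section operator; it has degree at most `n`. -/
def prjnk (r j n k : ℕ) : Polynomial ℝ :=
  ∑ m ∈ Finset.range (n + 1),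
    Polynomial.C
      (((∑ i ∈ Finset.range r, (Polynomial.X : Polynomial ℝ) ^ i) ^ n * pnk n k).coeff
        (r * m + j)) *
      Polynomial.X ^ m

namespace PowerSeries

lemma X_mul_mk_succ {R : Type*} [Semiring R] (g : ℕ → R) (h0 : g 0 = 0) :
    X * mk (fun l => g (l + 1)) = mk g := by
  ext (_ | l)
  · simp [h0]
  · simp [coeff_succ_X_mul]

variable {R : Type*} [CommRing R]

lemma coeff_one_sub_X_pow (N i : ℕ) :
    coeff i ((1 - X : R⟦X⟧) ^ N) = (-1) ^ i * N.choose i := by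
  have h : (1 - X : R⟦X⟧) ^ N = rescale (-1) (((1 + Polynomial.X : R[X]) ^ N : R[X]) : R⟦X⟧) := by
    simp [sub_eq_add_neg]
  rw [h, coeff_rescale, Polynomial.coeff_coe, Polynomial.coeff_one_add_X_pow]

lemma coeff_one_sub_X_pow_mul_mk (N : ℕ) (f : R → R) :
    coeff N ((1 - X) ^ N * mk fun l => f (l : R)) = (fwdDiff 1)^[N] f 0 := by
  rw [coeff_mul, Nat.sum_antidiagonal_eq_sum_range_succ (fun i j => coeff i _ * coeff j _),
    fwdDiff_iter_eq_sum_shift, ← sum_range_reflect]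
  refine sum_congr rfl fun k hk => ?_
  have hk : k ≤ N := Nat.lt_succ_iff.mp (mem_range.mp hk)
  rw [coeff_one_sub_X_pow, coeff_mk, Nat.succ_sub_one, Nat.sub_sub_self hk,
    Nat.choose_symm hk]
  simp [zsmul_eq_mul]

lemma X_mul_mk_one_add_pow {n : ℕ} (hn : n ≠ 0) :
    X * mk (fun l => (1 + (l : R)) ^ n) = mk fun l => (l : R) ^ n := by
  convert X_mul_mk_succ (fun l => (l : R) ^ n) (by simp [hn]) using 4
  push_cast
  ring

lemma coeff_one_sub_X_pow_succ_mul_mk_one_add_pow_self {n : ℕ} (hn : n ≠ 0) :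
    coeff n ((1 - X : R⟦X⟧) ^ (n + 1) * mk fun l => (1 + (l : R)) ^ n) = 0 := by
  rw [← coeff_succ_X_mul, mul_left_comm, X_mul_mk_one_add_pow hn,
    coeff_one_sub_X_pow_mul_mk (f := fun r => r ^ n),
    fwdDiff_iter_pow_eq_zero_of_lt n.lt_succ_self]
  rfl

end PowerSeries

lemma natDegree_pnk_le (n k : ℕ) : (pnk n k).natDegree ≤ n :=
  Nat.lt_succ_iff.mp (natDegree_trunc_lt _ n)

lemma sum_pnk (m : ℕ) : ∑ k ∈ range (m + 1), pnk m k = pnk (m + 1) 0 := by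
  set F := (1 - PowerSeries.X : ℝ⟦X⟧) ^ (m + 1 + 1) *
    PowerSeries.mk fun l => (1 + (l : ℝ)) ^ (m + 1) with hF
  have hmk : ∑ k ∈ range (m + 1), PowerSeries.mk (fun l => (l : ℝ) ^ k * (1 + l) ^ (m - k)) =
      (1 - PowerSeries.X) * PowerSeries.mk fun l => (1 + (l : ℝ)) ^ (m + 1) := by
    rw [sub_mul, one_mul, X_mul_mk_one_add_pow m.add_one_ne_zero]
    ext l
    have hgeom := geom_sum₂_mul (l : ℝ) (1 + l) (m + 1)
    simp only [Nat.add_sub_cancel] at hgeom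
    simp only [map_sum, map_sub, coeff_mk]
    linear_combination (-1 : ℝ) * hgeom
  have hsum : ∑ k ∈ range (m + 1), pnk m k = trunc (m + 1) F := by
    simp only [pnk, ← map_sum, ← mul_sum, hmk, hF, ← mul_assoc, ← pow_succ]
  have htop : pnk (m + 1) 0 = trunc (m + 1 + 1) F := by
    simp only [pnk, hF, pow_zero, one_mul, Nat.sub_zero]
  rw [hsum, htop, trunc_succ F (m + 1), hF,
    coeff_one_sub_X_pow_succ_mul_mk_one_add_pow_self m.add_one_ne_zero, map_zero, add_zero]

section VeroneseSection

variable {R : Type*} [CommSemiring R]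

/-- `S^r_j p` truncated to degree `< N`. -/
def veroneseSection (r j N : ℕ) : R[X] →ₗ[R] R[X] where
  toFun p := ∑ m ∈ range N, Polynomial.C (p.coeff (r * m + j)) * Polynomial.X ^ m
  map_add' p q := by simp only [Polynomial.coeff_add, map_add, add_mul, sum_add_distrib]
  map_smul' c p := by
    simp only [Polynomial.smul_eq_C_mul, Polynomial.coeff_C_mul, map_mul, RingHom.id_apply, mul_sum,
      mul_assoc]

lemma coeff_veroneseSection (r j N d : ℕ) (p : R[X]) :
    (veroneseSection r j N p).coeff d = if d < N then p.coeff (r * d + j) else 0 := by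
  simp [veroneseSection, Polynomial.coeff_C_mul, Polynomial.coeff_X_pow]

lemma veroneseSection_succ_of_natDegree_lt {r j N : ℕ} {p : R[X]} (h : p.natDegree < r * N + j) :
    veroneseSection r j (N + 1) p = veroneseSection r j N p := by
  simp [veroneseSection, sum_range_succ, Polynomial.coeff_eq_zero_of_natDegree_lt h]

lemma coeff_geomSum_mul_mul_succ {r : ℕ} (hr : 1 ≤ r) (e : ℕ) (p : R[X]) :
    ((∑ i ∈ range r, Polynomial.X ^ i) * p).coeff (r * (e + 1)) =
      p.coeff (r * (e + 1)) + ∑ j ∈ Ico 1 r, p.coeff (r * e + j) := by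
  have hterm : ∀ i ∈ range r,
      (Polynomial.X ^ i * p).coeff (r * (e + 1)) = p.coeff (r * e + (r - i)) := by
    intro i hi
    have hi : i < r := mem_range.mp hi
    rw [Polynomial.coeff_X_pow_mul', if_pos (by nlinarith)]
    congr 1
    rw [mul_add_one]
    omega
  rw [sum_mul, Polynomial.finsetSum_coeff, sum_congr rfl hterm, range_eq_Ico,
    sum_Ico_reflect (fun j => p.coeff (r * e + j)) _ (by omega), Nat.add_sub_cancel_left,
    Nat.sub_zero, sum_Ico_succ_top hr, mul_add_one, add_comm]

lemma natDegree_geomSum_le (r : ℕ) : (∑ i ∈ range r, (Polynomial.X : R[X]) ^ i).natDegree ≤ r - 1 :=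
  Polynomial.natDegree_sum_le_of_forall_le _ _ fun i hi =>
    (Polynomial.natDegree_X_pow_le i).trans (by have := mem_range.mp hi; omega)

lemma veroneseSection_zero_geomSum_mul {r : ℕ} (hr : 1 ≤ r) (N : ℕ) (p : R[X]) :
    veroneseSection r 0 (N + 1) ((∑ i ∈ range r, Polynomial.X ^ i) * p) =
      veroneseSection r 0 (N + 1) p + Polynomial.X * ∑ j ∈ Ico 1 r, veroneseSection r j N p := by
  ext (_ | d)
  · simp [coeff_veroneseSection, Polynomial.mul_coeff_zero, Polynomial.finsetSum_coeff,
      Nat.one_le_iff_ne_zero.mp hr]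
  · simp only [coeff_veroneseSection, Order.lt_add_one_iff, Order.add_one_le_iff, add_zero,
      coeff_geomSum_mul_mul_succ hr, Polynomial.coeff_add, Polynomial.coeff_X_mul,
      Polynomial.finsetSum_coeff, sum_ite_irrel, sum_const_zero]
    split_ifs <;> simp

end VeroneseSection

lemma prjnk_eq_veroneseSection (r j n k : ℕ) :
    prjnk r j n k = veroneseSection r j (n + 1) ((∑ i ∈ range r, Polynomial.X ^ i) ^ n * pnk n k) :=
  rfl

/-- Proposition 5.5, Equation (5.4):
`p^{⟨r,0⟩}_{n,0} − ∑_{k=0}^{n−1} p^{⟨r,0⟩}_{n−1,k} = x·∑_{j=1}^{r−1} ∑_{k=0}^{n−1} p^{⟨r,j⟩}_{n−1,k}`. -/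
theorem statement16 (n r : ℕ) (hn : 1 ≤ n) (hr : 1 ≤ r) :
    prjnk r 0 n 0 - ∑ k ∈ Finset.range n, prjnk r 0 (n - 1) k =
      Polynomial.X * ∑ j ∈ Finset.Ico 1 r, ∑ k ∈ Finset.range n, prjnk r j (n - 1) k := by
  obtain ⟨m, rfl⟩ := Nat.exists_eq_add_of_le' hn
  set A : ℝ[X] := ∑ i ∈ range r, Polynomial.X ^ i
  set B := A ^ m * pnk (m + 1) 0
  have hsum (j : ℕ) : ∑ k ∈ range (m + 1), prjnk r j m k = veroneseSection r j (m + 1) B := by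
    simp only [prjnk_eq_veroneseSection, ← map_sum, ← mul_sum, sum_pnk, B, A]
  have hP : (pnk (m + 1) 0).natDegree ≤ m :=
    sum_pnk m ▸ Polynomial.natDegree_sum_le_of_forall_le _ _ fun k _ => natDegree_pnk_le m k
  have hdeg : B.natDegree < r * (m + 1) := by
    calc B.natDegree ≤ m * (r - 1) + m :=
          Polynomial.natDegree_mul_le_of_le
            (Polynomial.natDegree_pow_le_of_le m (natDegree_geomSum_le r)) hP
      _ < r * (m + 1) := by
          obtain ⟨s, rfl⟩ := Nat.exists_eq_add_of_le' hr
          simp only [Nat.add_sub_cancel]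
          nlinarith
  rw [Nat.add_sub_cancel, prjnk_eq_veroneseSection, pow_succ', mul_assoc, hsum,
    sum_congr rfl fun j _ => hsum j, veroneseSection_zero_geomSum_mul hr,
    veroneseSection_succ_of_natDegree_lt (j := 0) hdeg, add_sub_cancel_left]
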